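/- arXiv:1802.01994 — 2 statements merged into one kernel-verified Lean document; each statement's English description precedes it below -/
import Mathlib

section
/- Let A be a ring. A three-term complex J₃ →^{d₃} J₂ →^{d₂} J₁ of injective right A-modules (with d₂ ∘ d₃ = 0) is exact at J₂ and splits if and only if for every finitely generated right A-module N the induced complex Hom_A(N, J₃) → Hom_A(N, J₂) → Hom_A(N, J₁) is exact at the middle term. -/
/-!
If `ker d₃` splits off `J₃`, then `d₃` has a section over its image, through which every map
into `ker d₂ = im d₃` lifts. Conversely, lifting along `N = A` gives exactness, and lifting along
the cyclic modules `A ⧸ I` verifies Baer's criterion for `ker d₃`, so `ker d₃` is injective and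
splits off. The resulting section `ker d₂ → J₃` of `d₃` extends to `J₂` because `J₃` is injective,
and composing with `d₃` retracts `J₂` onto `ker d₂`.
-/

namespace DGPaper

universe u v w

open LinearMap

section Splitting

variable {R : Type u} {M : Type v} {N : Type w} [Ring R] [AddCommGroup M] [AddCommGroup N]
  [Module R M] [Module R N]

theorem _root_.Submodule.exists_retraction_of_injective {p : Submodule R M}
    [Module.Injective R p] : ∃ r : M →ₗ[R] p, ∀ x : p, r x = x :=
  Module.Injective.out p.subtype Subtype.val_injective LinearMap.id

theorem exists_section_range_of_retraction_ker (f : M →ₗ[R] N) (r : M →ₗ[R] ker f)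
    (hr : ∀ x : ker f, r x = x) : ∃ s : range f →ₗ[R] M, ∀ y : range f, f (s y) = y := by
  have hc := isCompl_of_proj hr
  set q := Submodule.quotientEquivOfIsCompl (ker f) (ker r) hc
  refine ⟨(ker r).subtype ∘ₗ q.toLinearMap ∘ₗ f.quotKerEquivRange.symm.toLinearMap, fun y => ?_⟩
  set w := q (f.quotKerEquivRange.symm y)
  have hw : Submodule.Quotient.mk (p := ker f) (w : M) = f.quotKerEquivRange.symm y := by
    rw [← Submodule.quotientEquivOfIsCompl_symm_apply _ _ hc, LinearEquiv.symm_apply_apply]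
  calc f w = f.quotKerEquivRange (Submodule.Quotient.mk (w : M)) := rfl
    _ = y := by rw [hw, LinearEquiv.apply_symm_apply]

theorem exists_lift_of_retraction_ker (f : M →ₗ[R] N) (r : M →ₗ[R] ker f)
    (hr : ∀ x : ker f, r x = x) {P : Type*} [AddCommGroup P] [Module R P] (g : P →ₗ[R] N)
    (hg : range g ≤ range f) : ∃ h : P →ₗ[R] M, f ∘ₗ h = g := by
  obtain ⟨s, hs⟩ := exists_section_range_of_retraction_ker f r hr
  exact ⟨s ∘ₗ g.codRestrict _ fun x => hg (mem_range_self g x), ext fun x => hs _⟩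

theorem exists_retraction_range_of_section [Small.{v} R] [Module.Injective R M] (f : M →ₗ[R] N)
    (s : range f →ₗ[R] M) (hs : ∀ y : range f, f (s y) = y) :
    ∃ r : N →ₗ[R] range f, ∀ y : range f, r y = y := by
  obtain ⟨t, ht⟩ := Module.Injective.extension_property R M (range f) N (range f).subtype
    Subtype.val_injective s
  refine ⟨(f ∘ₗ t).codRestrict _ fun x => mem_range_self f (t x), fun y => Subtype.ext ?_⟩
  subst ht
  exact hs y

theorem injective_ker_of_exists_lift [Small.{v} R] [Module.Injective R M] (f : M →ₗ[R] N)
    (H : ∀ (I : Submodule R R) (g : R ⧸ I →ₗ[R] N), range g ≤ range f →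
      ∃ h : R ⧸ I →ₗ[R] M, f ∘ₗ h = g) :
    Module.Injective R (ker f) := by
  refine Module.Baer.injective fun I φ => ?_
  obtain ⟨F, hF⟩ := Module.Baer.of_injective ‹_› I ((ker f).subtype ∘ₗ φ)
  have hI : I ≤ ker (f ∘ₗ F) := fun x hx => by
    simp only [mem_ker, comp_apply, hF x hx]
    exact (φ ⟨x, hx⟩).2
  -- `f ∘ F` kills `I`, so it factors through `R ⧸ I`; subtracting a lift of that factor from `F`
  -- moves `F` into `ker f` without changing it on `I`.
  obtain ⟨h, hh⟩ := H I (I.liftQ _ hI)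
    ((Submodule.range_liftQ _ _ hI).trans_le (range_comp_le_range _ _))
  have hker : ∀ a, (F - h ∘ₗ I.mkQ) a ∈ ker f := fun a => by
    simp [← comp_apply (f := f) (g := h), hh]
  refine ⟨(F - h ∘ₗ I.mkQ).codRestrict _ hker, fun x hx => Subtype.ext ?_⟩
  simp [(Submodule.Quotient.mk_eq_zero I).mpr hx, hF x hx]

end Splitting

theorem statement12_general (A : Type u) [Ring A]
    (J₃ J₂ J₁ : Type u) [AddCommGroup J₃] [AddCommGroup J₂] [AddCommGroup J₁]
    [Module A J₃] [Module A J₂] [Module A J₁]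
    (hJ₃ : Module.Injective A J₃)
    (d₃ : J₃ →ₗ[A] J₂) (d₂ : J₂ →ₗ[A] J₁) (hd : d₂.comp d₃ = 0) :
    (LinearMap.range d₃ = LinearMap.ker d₂ ∧
      (∃ r : J₃ →ₗ[A] LinearMap.ker d₃, ∀ x : LinearMap.ker d₃, r x = x) ∧
      (∃ r : J₂ →ₗ[A] LinearMap.ker d₂, ∀ x : LinearMap.ker d₂, r x = x)) ↔
    (∀ (N : Type u) (_ : AddCommGroup N) (_ : Module A N), Module.Finite A N →
      ∀ g : N →ₗ[A] J₂, d₂.comp g = 0 → ∃ h : N →ₗ[A] J₃, d₃.comp h = g) := by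
  constructor
  · rintro ⟨hexact, ⟨r, hr⟩, -⟩ N _ _ _ g hg
    exact exists_lift_of_retraction_ker d₃ r hr g (hexact ▸ range_le_ker_iff.mpr hg)
  · intro H
    have hlift (N : Type u) [AddCommGroup N] [Module A N] [Module.Finite A N] (g : N →ₗ[A] J₂)
        (hg : range g ≤ range d₃) : ∃ h : N →ₗ[A] J₃, d₃ ∘ₗ h = g :=
      H N _ _ ‹_› g (range_le_ker_iff.mp (hg.trans (range_le_ker_iff.mpr hd)))
    have hexact : range d₃ = ker d₂ := by
      refine le_antisymm (range_le_ker_iff.mpr hd) fun y hy => ?_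
      obtain ⟨h, hh⟩ := H A _ _ inferInstance (toSpanSingleton A J₂ y) (by ext; simpa using hy)
      exact ⟨h 1, by simpa using congr($hh 1)⟩
    have : Module.Injective A (ker d₃) :=
      injective_ker_of_exists_lift d₃ fun I g hg => hlift (A ⧸ I) g hg
    obtain ⟨r₃, hr₃⟩ := Submodule.exists_retraction_of_injective (p := ker d₃)
    obtain ⟨s, hs⟩ := exists_section_range_of_retraction_ker d₃ r₃ hr₃
    exact ⟨hexact, ⟨r₃, hr₃⟩, hexact ▸ exists_retraction_range_of_section d₃ s hs⟩

/-- **Statement 12** (Lemma 3.18 of the paper).  Let `A` be a ring.  A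
three-term complex `J₃ → J₂ → J₁` of injective `A`-modules (with
`d₂ ∘ d₃ = 0`) is exact at `J₂` and splits (i.e. `ker d₃` is a direct summand
of `J₃` and `ker d₂` is a direct summand of `J₂`) if and only if for every
finitely generated `A`-module `N` the induced complex
`Hom_A(N, J₃) → Hom_A(N, J₂) → Hom_A(N, J₁)` is exact at the middle term. -/
theorem statement12 (A : Type u) [Ring A]
    (J₃ J₂ J₁ : Type u) [AddCommGroup J₃] [AddCommGroup J₂] [AddCommGroup J₁]
    [Module A J₃] [Module A J₂] [Module A J₁]
    (hJ₃ : Module.Injective A J₃) (hJ₂ : Module.Injective A J₂)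
    (hJ₁ : Module.Injective A J₁)
    (d₃ : J₃ →ₗ[A] J₂) (d₂ : J₂ →ₗ[A] J₁) (hd : d₂.comp d₃ = 0) :
    (LinearMap.range d₃ = LinearMap.ker d₂ ∧
      (∃ r : J₃ →ₗ[A] LinearMap.ker d₃, ∀ x : LinearMap.ker d₃, r x = x) ∧
      (∃ r : J₂ →ₗ[A] LinearMap.ker d₂, ∀ x : LinearMap.ker d₂, r x = x)) ↔
    (∀ (N : Type u) (_ : AddCommGroup N) (_ : Module A N), Module.Finite A N →
      ∀ g : N →ₗ[A] J₂, d₂.comp g = 0 → ∃ h : N →ₗ[A] J₃, d₃.comp h = g) :=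
  statement12_general A J₃ J₂ J₁ hJ₃ d₃ d₂ hd

end DGPaper
end

section
/- Let A be a right Noetherian ring. A right A-module M is finitely generated if and only if for every small family {J_λ}_{λ∈Λ} of injective right A-modules the canonical homomorphism ⊕_{λ∈Λ} Hom_A(M, J_λ) → Hom_A(M, ⊕_{λ∈Λ} J_λ) is an isomorphism. -/
/-!
A linear map from a finitely generated module into a direct sum lands in finitely many summands,
which gives one direction. Conversely, if `M` is not finitely generated it has a strictly
increasing chain `N₀ < N₁ < ⋯` of submodules. Embed each `M ⧸ Nₙ` into an injective module `Qₙ`.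
On `⋃ Nₙ` the maps `M → Qₙ` vanish for all large `n`, so together they form a map
`⋃ Nₙ → ⨁ₙ Qₙ`; over a Noetherian ring `⨁ₙ Qₙ` is injective (Baer's criterion, since ideals
are finitely generated), so this map extends to `M`. The extension has nonzero `n`-th component
for every `n`, hence does not come from `⨁ₙ Hom(M, Qₙ)`.
-/

open scoped DirectSum

namespace DGPaper

universe u v

noncomputable def canonHom (A : Type u) [Ring A]
    (M : Type u) [AddCommGroup M] [Module A M]
    (Λ : Type u) [DecidableEq Λ] (J : Λ → Type u)
    [∀ l, AddCommGroup (J l)] [∀ l, Module A (J l)] :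
    (⨁ (l : Λ), (M →ₗ[A] J l)) →+ (M →ₗ[A] (⨁ (l : Λ), J l)) :=
  DirectSum.toAddMonoid (fun l =>
    AddMonoidHom.mk' (fun f => (DirectSum.lof A Λ J l).comp f)
      (fun _f _g => LinearMap.comp_add _ _ _))

theorem _root_.DFinsupp.exists_coe_eq {Λ : Type*} [DecidableEq Λ] {β : Λ → Type*}
    [∀ l, Zero (β l)] (v : ∀ l, β l) (S : Finset Λ) (hv : ∀ l ∉ S, v l = 0) :
    ∃ F : Π₀ l, β l, ⇑F = v :=
  ⟨DFinsupp.mk S fun l => v l, funext fun l => by by_cases h : l ∈ S <;> simp [h, hv]⟩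

section

variable {A : Type*} [Ring A] {M : Type*} [AddCommGroup M] [Module A M]
  {Λ : Type*} [DecidableEq Λ] {J : Λ → Type v} [∀ l, AddCommGroup (J l)] [∀ l, Module A (J l)]

theorem exists_finset_apply_eq_zero_of_finite [Module.Finite A M] (g : M →ₗ[A] ⨁ l, J l) :
    ∃ S : Finset Λ, ∀ x l, l ∉ S → g x l = 0 := by
  classical
  obtain ⟨s, hs⟩ := Module.Finite.fg_top (R := A) (M := M)
  let S := s.biUnion fun x => (g x).support
  let P : Submodule A (⨁ l, J l) := ⨅ (l) (_ : l ∉ S), LinearMap.ker (DFinsupp.lapply l)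
  have hsP : Submodule.span A (s : Set M) ≤ P.comap g := by
    refine Submodule.span_le.2 fun x hx => ?_
    simp only [SetLike.mem_coe, Submodule.mem_comap, P, Submodule.mem_iInf, LinearMap.mem_ker]
    exact fun l hl => DFinsupp.notMem_support_iff.1 fun h =>
      hl (Finset.subset_biUnion_of_mem (fun x => (g x).support) hx h)
  refine ⟨S, fun x => ?_⟩
  have hx : g x ∈ P := hsP (hs ▸ Submodule.mem_top)
  simp only [P, Submodule.mem_iInf, LinearMap.mem_ker] at hx
  exact hx

theorem exists_coeFnLinearMap_comp_eq {N : Type*} [AddCommGroup N] [Module A N]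
    (g : N →ₗ[A] ∀ l, J l) (hg : ∀ x, ∃ S : Finset Λ, ∀ l ∉ S, g x l = 0) :
    ∃ g' : N →ₗ[A] ⨁ l, J l, DirectSum.coeFnLinearMap A ∘ₗ g' = g := by
  have hrange : ∀ x, g x ∈ LinearMap.range (DirectSum.coeFnLinearMap A (M := J)) := fun x => by
    obtain ⟨S, hS⟩ := hg x
    obtain ⟨F, hF⟩ := DFinsupp.exists_coe_eq (g x) S hS
    exact ⟨F, hF⟩
  let e := LinearEquiv.ofInjective (DirectSum.coeFnLinearMap A (M := J)) DFunLike.coe_injective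
  refine ⟨e.symm.toLinearMap ∘ₗ g.codRestrict _ hrange, LinearMap.ext fun x => ?_⟩
  exact congrArg Subtype.val (e.apply_symm_apply (g.codRestrict _ hrange x))

theorem injective_directSum [IsNoetherianRing A] [Small.{v} A] [∀ l, Module.Injective A (J l)] :
    Module.Injective A (⨁ l, J l) := by
  refine Module.Baer.injective fun I g => ?_
  obtain ⟨S, hS⟩ := exists_finset_apply_eq_zero_of_finite g
  choose H hH using fun l => Module.Baer.of_injective (inferInstance : Module.Injective A (J l))
    I (DFinsupp.lapply l ∘ₗ g)
  let H' : A →ₗ[A] ∀ l, J l := LinearMap.pi fun l => if l ∈ S then H l else 0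
  obtain ⟨G, hG⟩ := exists_coeFnLinearMap_comp_eq H' fun a => ⟨S, fun l hl => by simp [H', hl]⟩
  refine ⟨G, fun x hx => DFinsupp.ext fun l => ?_⟩
  change (DirectSum.coeFnLinearMap A ∘ₗ G) x l = _
  rw [hG]
  by_cases hl : l ∈ S
  · simpa [H', hl] using hH l x hx
  · simp [H', hl, hS]

end

section

variable {A : Type u} [Ring A] {M : Type u} [AddCommGroup M] [Module A M]
  {Λ : Type u} [DecidableEq Λ] {J : Λ → Type u} [∀ l, AddCommGroup (J l)] [∀ l, Module A (J l)]

theorem canonHom_apply_apply (F : ⨁ l, (M →ₗ[A] J l)) (x : M) (l : Λ) :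
    canonHom A M Λ J F x l = F l x := by
  induction F using DirectSum.induction_on with
  | zero => simp
  | of l' f =>
    rw [canonHom, DirectSum.toAddMonoid_of]
    rcases eq_or_ne l' l with rfl | h
    · simp [DirectSum.lof_eq_of, DirectSum.of_eq_same]
    · simp [DirectSum.lof_eq_of, DirectSum.of_eq_of_ne _ _ _ h.symm]
  | add F G hF hG => simp [hF, hG]

theorem canonHom_injective : Function.Injective (canonHom A M Λ J) := fun F G hFG =>
  DFinsupp.ext fun l => LinearMap.ext fun x => by
    rw [← canonHom_apply_apply, ← canonHom_apply_apply, hFG]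

theorem canonHom_surjective [Module.Finite A M] : Function.Surjective (canonHom A M Λ J) := by
  intro g
  obtain ⟨S, hS⟩ := exists_finset_apply_eq_zero_of_finite g
  obtain ⟨F, hF⟩ := DFinsupp.exists_coe_eq (fun l => DFinsupp.lapply l ∘ₗ g) S
    fun l hl => LinearMap.ext fun x => hS x l hl
  refine ⟨F, LinearMap.ext fun x => DFinsupp.ext fun l => ?_⟩
  rw [canonHom_apply_apply, hF]
  rfl

end

theorem exists_strictMono_of_not_finite {A : Type*} [Ring A] {M : Type*} [AddCommGroup M]
    [Module A M] (hM : ¬ Module.Finite A M) : ∃ N : ℕ → Submodule A M, StrictMono N := by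
  have : ¬ IsNoetherian A M := fun _ => hM inferInstance
  rw [isNoetherian_iff', WellFoundedGT, isWellFounded_iff, RelEmbedding.wellFounded_iff_isEmpty,
    not_isEmpty_iff] at this
  obtain ⟨f⟩ := this
  exact ⟨f, fun m n h => f.map_rel_iff.2 h⟩

theorem exists_injective_linearMap_to_injective (A : Type*) [Ring A] {N : Type v} [Small.{v} A]
    [AddCommGroup N] [Module A N] :
    ∃ Q : ModuleCat.{v} A, Module.Injective A Q ∧ ∃ f : N →ₗ[A] Q, Function.Injective f := by
  open CategoryTheory in
  have : Injective (ModuleCat.of A (Injective.under (ModuleCat.of A N)).carrier) :=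
    inferInstanceAs (Injective (Injective.under (ModuleCat.of A N)))
  exact ⟨_, Module.injective_module_of_injective_object A _,
    (CategoryTheory.Injective.ι (ModuleCat.of A N)).hom,
    (ModuleCat.mono_iff_injective _).1 inferInstance⟩

theorem not_surjective_canonHom_of_strictMono {A : Type u} [Ring A] [IsNoetherianRing A]
    {M : Type u} [AddCommGroup M] [Module A M] {N : ℕ → Submodule A M} (hN : StrictMono N)
    (Q : ℕ → Type u) [∀ n, AddCommGroup (Q n)] [∀ n, Module A (Q n)]
    [∀ n, Module.Injective A (Q n)] (e : ∀ n, (M ⧸ N n) →ₗ[A] Q n)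
    (he : ∀ n, Function.Injective (e n)) :
    ¬ Function.Surjective (canonHom A M (ULift.{u} ℕ) fun l => Q l.down) := by
  classical
  intro hsurj
  let N' := ⨆ n, N n
  let ψ : N' →ₗ[A] ∀ l : ULift.{u} ℕ, Q l.down :=
    LinearMap.pi fun l => e l.down ∘ₗ (N l.down).mkQ ∘ₗ N'.subtype
  have hψ : ∀ x, ∃ S : Finset (ULift.{u} ℕ), ∀ l ∉ S, ψ x l = 0 := by
    rintro ⟨x, hx⟩
    obtain ⟨n, hn⟩ := (Submodule.mem_iSup_of_directed N hN.monotone.directed_le).1 hx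
    refine ⟨(Finset.range n).map ⟨ULift.up, ULift.up_injective⟩, fun l hl => ?_⟩
    have hnl : n ≤ l.down := by
      by_contra! h
      exact hl (Finset.mem_map.2 ⟨l.down, Finset.mem_range.2 h, rfl⟩)
    simp [ψ, (Submodule.Quotient.mk_eq_zero _).2 (hN.monotone hnl hn)]
  obtain ⟨φ, hφ⟩ := exists_coeFnLinearMap_comp_eq ψ hψ
  have := injective_directSum (A := A) (J := fun l : ULift.{u} ℕ => Q l.down)
  obtain ⟨G, hG⟩ := Module.Injective.extension_property A _ _ _ N'.subtype
    Subtype.val_injective φ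
  obtain ⟨F, rfl⟩ := hsurj G
  obtain ⟨⟨n⟩, hn⟩ := Infinite.exists_notMem_finset F.support
  refine (hN n.lt_succ_self).not_ge fun x hx => ?_
  have hx' : x ∈ N' := le_iSup N (n + 1) hx
  have hxn : e n (Submodule.Quotient.mk x) = 0 := calc
    e n (Submodule.Quotient.mk x) = ψ ⟨x, hx'⟩ ⟨n⟩ := rfl
    _ = φ ⟨x, hx'⟩ ⟨n⟩ := congr($hφ.symm ⟨x, hx'⟩ ⟨n⟩)
    _ = canonHom A M _ _ F x ⟨n⟩ := congr($hG.symm ⟨x, hx'⟩ ⟨n⟩)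
    _ = F ⟨n⟩ x := canonHom_apply_apply F x ⟨n⟩
    _ = 0 := by rw [DFinsupp.notMem_support_iff.1 hn, LinearMap.zero_apply]
  exact (Submodule.Quotient.mk_eq_zero _).1 ((injective_iff_map_eq_zero _).1 (he n) _ hxn)

/-- **Statement 17** (Lemma 3.29 of the paper).  Let `A` be a right Noetherian
ring.  An `A`-module `M` is finitely generated if and only if for every small
family `(J_λ)_{λ ∈ Λ}` of injective `A`-modules the canonical homomorphism
`⊕_λ Hom_A(M, J_λ) → Hom_A(M, ⊕_λ J_λ)` is an isomorphism. -/
theorem statement17 (A : Type u) [Ring A] (hA : IsNoetherianRing A)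
    (M : Type u) [AddCommGroup M] [Module A M] :
    Module.Finite A M ↔
      ∀ (Λ : Type u) (_ : DecidableEq Λ) (J : Λ → Type u)
        (_ : ∀ l, AddCommGroup (J l)) (_ : ∀ l, Module A (J l)),
        (∀ l, Module.Injective A (J l)) →
        Function.Bijective (canonHom A M Λ J) := by
  refine ⟨fun _ Λ _ J _ _ _ => ⟨canonHom_injective, canonHom_surjective⟩, fun h => ?_⟩
  by_contra hM
  obtain ⟨N, hN⟩ := exists_strictMono_of_not_finite hM
  choose Q hQ e he using fun n => exists_injective_linearMap_to_injective A (N := M ⧸ N n)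
  exact not_surjective_canonHom_of_strictMono hN (fun n => Q n) e he
    (h _ _ _ _ _ fun l => hQ l.down).2

end DGPaper
end
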